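/- Let A be an n×n complex matrix with A = V D V⁻¹, where V is invertible and D is diagonal. Let v_1,…,v_n be the columns of V and let w_1*,…,w_n* be the rows of V⁻¹. Then κ_V(A) ≤ √( n · Σ_{i=1}^n ‖v_i‖²·‖w_i‖² ), where κ_V(A) is the infimum of ‖V'‖·‖V'⁻¹‖ over all invertible V' such that V'⁻¹AV' is diagonal. -/

import Mathlib

/-!
Replacing `V` by `V * diagonal c` with all `c i ≠ 0` still diagonalizes `A`, scales the columns
`v_i` by `c i` and the rows `w_i*` of the inverse by `(c i)⁻¹`. With `c i = √(‖w_i‖ / ‖v_i‖)` the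
`i`-th column and the `i`-th row both get norm `√(‖v_i‖ ‖w_i‖)`, so bounding both spectral norms by
Frobenius norms gives `κ_V(A) ≤ Σ_i ‖v_i‖ ‖w_i‖`; Cauchy–Schwarz finishes.
-/

open Matrix

/-- The Euclidean norm of a vector in `ℂⁿ`. -/
noncomputable def enorm {n : ℕ} (v : Fin n → ℂ) : ℝ :=
  Real.sqrt (∑ i, ‖v i‖ ^ 2)

/-- The spectral norm (`ℓ² → ℓ²` operator norm) of a complex matrix:
the supremum of `‖Av‖` over Euclidean-unit vectors `v`. -/
noncomputable def specNorm {m n : ℕ} (A : Matrix (Fin m) (Fin n) ℂ) : ℝ :=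
  sSup {s | ∃ v : Fin n → ℂ, _root_.enorm v = 1 ∧ s = _root_.enorm (A.mulVec v)}

/-- The eigenvector condition number `κ_V(A)`: the infimum of `‖V'‖·‖V'⁻¹‖` over all invertible
`V'` such that `V'⁻¹ A V'` is diagonal. -/
noncomputable def kappaV {n : ℕ} (A : Matrix (Fin n) (Fin n) ℂ) : ℝ :=
  sInf {x | ∃ V : Matrix (Fin n) (Fin n) ℂ,
    IsUnit V ∧ (V⁻¹ * A * V).IsDiag ∧ x = specNorm V * specNorm V⁻¹}

lemma enorm_eq_norm_toLp {n : ℕ} (v : Fin n → ℂ) :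
    _root_.enorm v = ‖(WithLp.toLp 2 v : EuclideanSpace ℂ (Fin n))‖ :=
  (EuclideanSpace.norm_eq _).symm

lemma enorm_nonneg {n : ℕ} (v : Fin n → ℂ) : 0 ≤ _root_.enorm v := Real.sqrt_nonneg _

lemma enorm_sq {n : ℕ} (v : Fin n → ℂ) : _root_.enorm v ^ 2 = ∑ i, ‖v i‖ ^ 2 :=
  Real.sq_sqrt (by positivity)

lemma enorm_pos_of_ne_zero {n : ℕ} {v : Fin n → ℂ} (hv : v ≠ 0) : 0 < _root_.enorm v := by
  rw [enorm_eq_norm_toLp, norm_pos_iff]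
  exact fun h => hv (congrArg WithLp.ofLp h)

lemma enorm_const_mul {n : ℕ} (a : ℂ) (v : Fin n → ℂ) :
    _root_.enorm (fun i => a * v i) = ‖a‖ * _root_.enorm v := by
  simp only [enorm_eq_norm_toLp, ← norm_smul, ← WithLp.toLp_smul]
  rfl

lemma enorm_mul_const {n : ℕ} (v : Fin n → ℂ) (a : ℂ) :
    _root_.enorm (fun i => v i * a) = _root_.enorm v * ‖a‖ := by
  simp only [mul_comm _ a, enorm_const_mul, mul_comm ‖a‖]

lemma norm_dotProduct_le {n : ℕ} (u v : Fin n → ℂ) :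
    ‖u ⬝ᵥ v‖ ≤ _root_.enorm u * _root_.enorm v :=
  calc ‖u ⬝ᵥ v‖ ≤ ∑ j, ‖u j‖ * ‖v j‖ := (norm_sum_le _ _).trans_eq (by simp only [norm_mul])
    _ ≤ _ := Real.sum_mul_le_sqrt_mul_sqrt _ _ _

lemma specNorm_nonneg {m n : ℕ} (A : Matrix (Fin m) (Fin n) ℂ) : 0 ≤ specNorm A :=
  Real.sSup_nonneg (by rintro x ⟨v, -, rfl⟩; exact enorm_nonneg _)

lemma specNorm_le_sqrt_sum_enorm_row_sq {m n : ℕ} (A : Matrix (Fin m) (Fin n) ℂ) :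
    specNorm A ≤ Real.sqrt (∑ i, _root_.enorm (fun j => A i j) ^ 2) := by
  refine Real.sSup_le ?_ (Real.sqrt_nonneg _)
  rintro x ⟨v, hv, rfl⟩
  refine Real.sqrt_le_sqrt (Finset.sum_le_sum fun i _ => ?_)
  refine pow_le_pow_left₀ (norm_nonneg _) ?_ 2
  simpa only [hv, mul_one, Matrix.mulVec] using norm_dotProduct_le (A i) v

lemma specNorm_le_sqrt_sum_enorm_col_sq {m n : ℕ} (A : Matrix (Fin m) (Fin n) ℂ) :
    specNorm A ≤ Real.sqrt (∑ j, _root_.enorm (fun i => A i j) ^ 2) := by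
  refine (specNorm_le_sqrt_sum_enorm_row_sq A).trans_eq ?_
  simp only [enorm_sq]
  rw [Finset.sum_comm]

lemma kappaV_le_specNorm_mul {n : ℕ} {A W : Matrix (Fin n) (Fin n) ℂ} (hW : IsUnit W)
    (hdiag : (W⁻¹ * A * W).IsDiag) : kappaV A ≤ specNorm W * specNorm W⁻¹ :=
  csInf_le ⟨0, by rintro x ⟨U, -, -, rfl⟩; exact mul_nonneg (specNorm_nonneg _) (specNorm_nonneg _)⟩
    ⟨W, hW, hdiag, rfl⟩

section InvertibleMatrix

variable {ι R : Type*} [Fintype ι] [DecidableEq ι] [NonAssocSemiring R] [Nontrivial R]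
  {B C : Matrix ι ι R}

lemma row_ne_zero_of_mul_eq_one (h : B * C = 1) (i : ι) : B i ≠ 0 := by
  intro hi
  simpa [Matrix.mul_apply, hi] using congrFun (congrFun h i) i

lemma col_ne_zero_of_mul_eq_one (h : B * C = 1) (i : ι) : (fun j => C j i) ≠ 0 := by
  intro hi
  have hCi (j : ι) : C j i = 0 := congrFun hi j
  simpa [Matrix.mul_apply, hCi] using congrFun (congrFun h i) i

end InvertibleMatrix

section Rescaling

variable {ι K : Type*} [Fintype ι] [DecidableEq ι] [Field K] {V : Matrix ι ι K} {c : ι → K}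

lemma mul_diagonal_inv (hV : IsUnit V) (hc : ∀ i, c i ≠ 0) :
    (V * Matrix.diagonal c)⁻¹ = Matrix.diagonal c⁻¹ * V⁻¹ := by
  refine Matrix.inv_eq_left_inv ?_
  rw [Matrix.mul_assoc, Matrix.nonsing_inv_mul_cancel_left _ _
    ((Matrix.isUnit_iff_isUnit_det V).mp hV), Matrix.diagonal_mul_diagonal]
  simp [hc]

lemma isDiag_inv_mul_mul_of_eq_mul_diagonal_mul_inv {A : Matrix ι ι K} {d : ι → K}
    (hV : IsUnit V) (hA : A = V * Matrix.diagonal d * V⁻¹) (hc : ∀ i, c i ≠ 0) :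
    ((V * Matrix.diagonal c)⁻¹ * A * (V * Matrix.diagonal c)).IsDiag := by
  rw [mul_diagonal_inv hV hc, hA]
  simp only [Matrix.mul_assoc, Matrix.nonsing_inv_mul_cancel_left _ _
    ((Matrix.isUnit_iff_isUnit_det V).mp hV), Matrix.diagonal_mul_diagonal]
  exact Matrix.isDiag_diagonal _

end Rescaling

lemma kappaV_le_sum_enorm_col_mul_enorm_row {n : ℕ} {A V : Matrix (Fin n) (Fin n) ℂ}
    {d : Fin n → ℂ} (hV : IsUnit V) (hA : A = V * Matrix.diagonal d * V⁻¹) :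
    kappaV A ≤ ∑ i, _root_.enorm (fun j => V j i) * _root_.enorm (fun j => V⁻¹ i j) := by
  have hVV : V⁻¹ * V = 1 := Matrix.nonsing_inv_mul V ((Matrix.isUnit_iff_isUnit_det V).mp hV)
  set a : Fin n → ℝ := fun i => _root_.enorm (fun j => V j i)
  set b : Fin n → ℝ := fun i => _root_.enorm (fun j => V⁻¹ i j)
  have ha (i : Fin n) : 0 < a i := enorm_pos_of_ne_zero (col_ne_zero_of_mul_eq_one hVV i)
  have hb (i : Fin n) : 0 < b i := enorm_pos_of_ne_zero (row_ne_zero_of_mul_eq_one hVV i)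
  set t : Fin n → ℝ := fun i => Real.sqrt (b i / a i)
  have ht (i : Fin n) : 0 < t i := Real.sqrt_pos.mpr (div_pos (hb i) (ha i))
  have hcol (i : Fin n) : (a i * t i) ^ 2 = a i * b i := by
    rw [mul_pow, Real.sq_sqrt (div_pos (hb i) (ha i)).le]
    field_simp [(ha i).ne']
  have hrow (i : Fin n) : ((t i)⁻¹ * b i) ^ 2 = a i * b i := by
    rw [mul_pow, inv_pow, Real.sq_sqrt (div_pos (hb i) (ha i)).le]
    field_simp [(hb i).ne']
  set c : Fin n → ℂ := fun i => (t i : ℂ)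
  have hc (i : Fin n) : c i ≠ 0 := Complex.ofReal_ne_zero.mpr (ht i).ne'
  set W := V * Matrix.diagonal c
  have hW : IsUnit W :=
    hV.mul (Matrix.isUnit_diagonal.mpr (Pi.isUnit_iff.mpr fun i => (hc i).isUnit))
  set S := ∑ i, a i * b i
  have hWcol : specNorm W ≤ Real.sqrt S := by
    refine (specNorm_le_sqrt_sum_enorm_col_sq W).trans_eq ?_
    simp only [W, c, Matrix.mul_diagonal, enorm_mul_const, Complex.norm_real,
      Real.norm_of_nonneg (ht _).le]
    exact congrArg Real.sqrt (Finset.sum_congr rfl fun i _ => hcol i)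
  have hWrow : specNorm W⁻¹ ≤ Real.sqrt S := by
    refine (specNorm_le_sqrt_sum_enorm_row_sq W⁻¹).trans_eq ?_
    rw [mul_diagonal_inv hV hc]
    simp only [c, Matrix.diagonal_mul, Pi.inv_apply, enorm_const_mul, norm_inv, Complex.norm_real,
      Real.norm_of_nonneg (ht _).le]
    exact congrArg Real.sqrt (Finset.sum_congr rfl fun i _ => hrow i)
  calc kappaV A ≤ specNorm W * specNorm W⁻¹ :=
        kappaV_le_specNorm_mul hW (isDiag_inv_mul_mul_of_eq_mul_diagonal_mul_inv hV hA hc)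
    _ ≤ Real.sqrt S * Real.sqrt S := mul_le_mul hWcol hWrow (specNorm_nonneg _) (Real.sqrt_nonneg _)
    _ = S := Real.mul_self_sqrt (Finset.sum_nonneg fun i _ => (mul_pos (ha i) (hb i)).le)

/-- If `A = V D V⁻¹` with `V` invertible and `D` diagonal, and `v_i` denote the columns of `V`
and `w_i*` the rows of `V⁻¹`, then `κ_V(A) ≤ √(n · Σ_i ‖v_i‖²‖w_i‖²)`. -/
theorem kappaV_le_sqrt_sum {n : ℕ} (A V : Matrix (Fin n) (Fin n) ℂ) (d : Fin n → ℂ)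
    (hV : IsUnit V) (hA : A = V * Matrix.diagonal d * V⁻¹) :
    kappaV A ≤ Real.sqrt ((n : ℝ) *
      ∑ i : Fin n, _root_.enorm (fun j => V j i) ^ 2 * _root_.enorm (fun j => V⁻¹ i j) ^ 2) := by
  refine (kappaV_le_sum_enorm_col_mul_enorm_row hV hA).trans (Real.le_sqrt_of_sq_le ?_)
  simpa only [Finset.card_univ, Fintype.card_fin, mul_pow] using
    sq_sum_le_card_mul_sum_sq (s := Finset.univ)
      (f := fun i => _root_.enorm (fun j => V j i) * _root_.enorm (fun j => V⁻¹ i j))
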